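/- arXiv:1611.00575 — 7 statements merged into one kernel-verified Lean document; each statement's English description precedes it below -/
import Mathlib

section
/- Let α be a finite type and f : α → α. The set of periodic points of f equals the intersection over all natural numbers n of the images f^[n] '' Set.univ. -/
theorem periodicPts_eq_iInter_iterate_image {α : Type*} [Finite α] (f : α → α) :
    Function.periodicPts f = ⋂ n : ℕ, f^[n] '' Set.univ := by
  ext x
  simp only [Set.mem_iInter, Set.mem_image, Set.mem_univ, true_and]
  constructor
  · rintro ⟨n, hn, hx⟩ m
    refine ⟨f^[n * (m + 1) - m] x, ?_⟩
    rw [← Function.iterate_add_apply]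
    have hm : m ≤ n * (m + 1) := by nlinarith
    rw [Nat.add_sub_cancel' hm]
    exact (hx.mul_const (m + 1)).eq
  · intro h
    obtain ⟨i, j, hne, hij⟩ := Finite.exists_ne_map_eq_of_infinite (fun n : ℕ => f^[n])
    wlog hlt : i < j generalizing i j
    · exact this j i hne.symm hij.symm (by omega)
    obtain ⟨y, hy⟩ := h i
    refine ⟨j - i, by omega, ?_⟩
    show f^[j - i] x = x
    rw [← hy, ← Function.iterate_add_apply, Nat.sub_add_cancel hlt.le, ← hij]
end

section
/- Correctness of the stopping criterion of the naive algorithm for counting periodic points: let α be a finite type and f : α → α. If for some natural number n the cardinality of f^[n+1] '' Set.univ equals the cardinality of f^[n] '' Set.univ, then f^[n] '' Set.univ is exactly the set of periodic points of f. In particular, when the number of elements in the list remains constant after applying f, that number equals the number of periodic points of f. -/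
theorem stopping_criterion {α : Type*} [Finite α] (f : α → α) (n : ℕ)
    (h : (f^[n + 1] '' Set.univ).ncard = (f^[n] '' Set.univ).ncard) :
    f^[n] '' Set.univ = Function.periodicPts f := by
  set S : Set α := f^[n] '' Set.univ with hS
  have hfin : S.Finite := Set.toFinite S
  have hsub : f '' S ⊆ S := by
    rintro _ ⟨_, ⟨y, -, rfl⟩, rfl⟩
    exact ⟨f y, Set.mem_univ _, by rw [← Function.iterate_succ_apply, Function.iterate_succ_apply']⟩
  have key : f '' S = f^[n + 1] '' Set.univ := by
    rw [hS, ← Set.image_comp, ← Function.iterate_succ']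
  have himg : f '' S = S := Set.eq_of_subset_of_ncard_le hsub (by rw [key, h]) hfin
  have hmaps : Set.MapsTo f S S := fun x hx => himg ▸ Set.mem_image_of_mem f hx
  have hbij : Set.BijOn f S S :=
    (hfin.surjOn_iff_bijOn_of_mapsTo hmaps).mp himg.ge
  have hbijk : ∀ k, Set.BijOn f^[k] S S := by
    intro k
    induction k with
    | zero => simpa using Set.bijOn_id S
    | succ k ih => rw [Function.iterate_succ']; exact hbij.comp ih
  apply Set.Subset.antisymm
  · intro x hx
    obtain ⟨i, j, hij, hfe⟩ := Finite.exists_ne_map_eq_of_infinite (fun k : ℕ => f^[k] x)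
    wlog hlt : i < j generalizing i j
    · exact this j i hij.symm hfe.symm (hij.lt_or_gt.resolve_left hlt)
    have hx1 : f^[j - i] x ∈ S := (hbijk _).mapsTo hx
    have : f^[i] (f^[j - i] x) = f^[i] x := by
      rw [← Function.iterate_add_apply, Nat.add_sub_cancel' hlt.le]
      exact hfe.symm
    have := (hbijk i).injOn hx1 hx this
    exact Function.mk_mem_periodicPts (Nat.sub_pos_of_lt hlt) this
  · rintro x hx
    obtain ⟨m, hm, hpm⟩ := Function.mem_periodicPts.mp hx
    have : f^[m * n] x = x := (hpm.mul_const n)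
    refine ⟨f^[m * n - n] x, Set.mem_univ _, ?_⟩
    rw [← Function.iterate_add_apply, Nat.add_sub_cancel' (Nat.le_mul_of_pos_left n hm)]
    exact this
end

section
/- Progress of the naive algorithm: let α be a finite type and f : α → α. If f^[n] '' Set.univ is not equal to the set of periodic points of f, then the cardinality of f^[n+1] '' Set.univ is strictly smaller than the cardinality of f^[n] '' Set.univ. Hence the algorithm strictly decreases the list size until it reaches the set of periodic points. -/
theorem algorithm_progress {α : Type*} [Finite α] (f : α → α) (n : ℕ)
    (h : f^[n] '' Set.univ ≠ Function.periodicPts f) :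
    (f^[n + 1] '' Set.univ).ncard < (f^[n] '' Set.univ).ncard := by
  have hsub : f^[n + 1] '' Set.univ ⊆ f^[n] '' Set.univ := by
    rintro x ⟨y, -, rfl⟩
    exact ⟨f y, trivial, (Function.iterate_succ_apply f n y).symm⟩
  have hfin : (f^[n] '' Set.univ).Finite := Set.toFinite _
  by_contra hlt
  push_neg at hlt
  have heq : f^[n + 1] '' Set.univ = f^[n] '' Set.univ :=
    Set.eq_of_subset_of_ncard_le hsub hlt hfin
  apply h
  set S := f^[n] '' Set.univ with hS
  have hfS : f '' S = S := by
    rw [hS, Set.image_image]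
    simp only [← Function.iterate_succ_apply' f n]
    exact heq
  -- f maps S to S and is surjective on S, hence bijective on S
  have hmaps : Set.MapsTo f S S := fun x hx => hfS ▸ Set.mem_image_of_mem f hx
  have hsurj : Set.SurjOn f S S := by rw [Set.SurjOn, hfS]
  have hbij : Set.BijOn f S S := hfin.surjOn_iff_bijOn_of_mapsTo hmaps |>.mp hsurj
  have hiter : ∀ k, Set.BijOn f^[k] S S := fun k => by
    induction k with
    | zero => simpa using Set.bijOn_id S
    | succ k ih => rw [Function.iterate_succ]; exact ih.comp hbij
  apply Set.Subset.antisymm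
  · -- every point of S is periodic
    intro x hx
    have hmem : ∀ k : ℕ, f^[k] x ∈ S := fun k => (hiter k).mapsTo hx
    obtain ⟨i, j, hne, hij⟩ := Finite.exists_ne_map_eq_of_infinite
      (fun k : ℕ => (⟨f^[k] x, hmem k⟩ : S))
    wlog hlt' : i < j generalizing i j
    · exact this j i hne.symm hij.symm (by omega)
    have hij' : f^[i] x = f^[j] x := congrArg Subtype.val hij
    have : f^[i] (f^[j - i] x) = f^[i] x := by
      rw [← Function.iterate_add_apply]
      rw [show i + (j - i) = j by omega] at *
      exact hij'.symm
    have hx' : f^[j - i] x = x := (hiter i).injOn (hmem _) hx this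
    exact Function.mk_mem_periodicPts (by omega) hx'
  · -- periodic points are in S
    intro x hx
    obtain ⟨m, hm, hmx⟩ := Function.mem_periodicPts.mp hx
    have hmn : Function.IsPeriodicPt f (m * n) x := hmx.mul_const n
    rcases n with _ | n
    · exact ⟨x, trivial, rfl⟩
    · refine ⟨f^[m * (n + 1) - (n + 1)] x, trivial, ?_⟩
      rw [← Function.iterate_add_apply,
        show n + 1 + (m * (n + 1) - (n + 1)) = m * (n + 1) by
          have := Nat.le_mul_of_pos_left (n + 1) hm; omega]
      exact hmn
end

section
/- Let α be a finite type with cardinality N and f : α → α. Then f^[N] '' Set.univ is exactly the set of periodic points of f; that is, the iterated images stabilize to the set of periodic points after at most N = card α steps. -/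
theorem iterate_card_image_eq_periodicPts {α : Type*} [Finite α] (f : α → α) :
    f^[Nat.card α] '' Set.univ = Function.periodicPts f := by
  classical
  cases nonempty_fintype α
  set N := Nat.card α with hN
  have hNcard : N = Fintype.card α := Nat.card_eq_fintype_card
  ext x
  constructor
  · rintro ⟨y, -, rfl⟩
    -- pigeonhole: among y, f y, ..., f^[N] y there is a repetition
    obtain ⟨i, j, hij, heq⟩ :=
      Fintype.exists_ne_map_eq_of_card_lt (fun i : Fin (N + 1) => f^[(i : ℕ)] y)
        (by simp [← hNcard])
    wlog hlt : (i : ℕ) < (j : ℕ) generalizing i j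
    · have hne : (i : ℕ) ≠ (j : ℕ) := fun h => hij (Fin.ext h)
      exact this j i hij.symm heq.symm (by omega)
    · have hper : Function.IsPeriodicPt f ((j : ℕ) - i) (f^[(i : ℕ)] y) := by
        unfold Function.IsPeriodicPt Function.IsFixedPt
        rw [← Function.iterate_add_apply, Nat.sub_add_cancel hlt.le]
        exact heq.symm
      have : Function.IsPeriodicPt f ((j : ℕ) - i) (f^[N - i] (f^[(i : ℕ)] y)) :=
        hper.apply_iterate _
      rw [← Function.iterate_add_apply, Nat.sub_add_cancel (by omega : (i : ℕ) ≤ N)] at this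
      exact Function.mk_mem_periodicPts (by omega) this
  · intro hx
    obtain ⟨n, hn, hfix⟩ := hx
    have hα : Nonempty α := ⟨x⟩
    have hNpos : 0 < N := Nat.card_pos
    refine ⟨f^[n * N - N] x, Set.mem_univ _, ?_⟩
    rw [← Function.iterate_add_apply, Nat.add_sub_cancel' (Nat.le_mul_of_pos_left N hn)]
    exact hfix.mul_const N
end

section
/- Explicit formula for T₀(p) (Vasiga–Shallit): let p be an odd prime and write p − 1 = 2^e · d with d odd (so d is the odd part of p − 1). Then the number of periodic points of the squaring map f₀(x) = x² on ZMod p equals 1 + d. -/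
/-!
A nonzero `x` is periodic under squaring iff `x ^ (2 ^ n - 1) = 1` for some `n > 0`, i.e. iff its
multiplicative order is odd, since `2` is invertible modulo an odd number and only modulo one.
In a finite field with `q - 1 = 2 ^ e * d`, `d` odd, the elements of odd order are exactly the
`d`-th roots of unity, of which there are `d` because the unit group is cyclic. Together with the
fixed point `0` this gives `1 + d` periodic points.
-/

open Function Polynomial

lemma Nat.odd_iff_exists_dvd_two_pow_sub_one {m : ℕ} :
    Odd m ↔ ∃ n, 0 < n ∧ m ∣ 2 ^ n - 1 := by
  constructor
  · intro hm
    refine ⟨m.totient, Nat.totient_pos.mpr hm.pos, ?_⟩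
    exact (Nat.modEq_iff_dvd' Nat.one_le_two_pow).mp
      (Nat.ModEq.pow_totient hm.coprime_two_left).symm
  · rintro ⟨n, hn, hdvd⟩
    have hodd : Odd (2 ^ n - 1) :=
      Nat.Even.sub_odd Nat.one_le_two_pow (Nat.even_pow.mpr ⟨even_two, hn.ne'⟩) odd_one
    exact hodd.of_dvd_nat hdvd

section MonoidWithZero

variable {M₀ : Type*} [MonoidWithZero M₀] [IsRightCancelMulZero M₀] {x : M₀}

lemma isPeriodicPt_sq_iff_orderOf_dvd (hx : x ≠ 0) (n : ℕ) :
    IsPeriodicPt (fun y : M₀ => y ^ 2) n x ↔ orderOf x ∣ 2 ^ n - 1 := by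
  rw [orderOf_dvd_iff_pow_eq_one, IsPeriodicPt, IsFixedPt, pow_iterate]
  dsimp only
  rw [← pow_sub_one_mul (pow_ne_zero n two_ne_zero), mul_left_eq_self₀, or_iff_left hx]

lemma mem_periodicPts_sq_iff_odd_orderOf (hx : x ≠ 0) :
    x ∈ periodicPts (fun y : M₀ => y ^ 2) ↔ Odd (orderOf x) := by
  simp only [mem_periodicPts, isPeriodicPt_sq_iff_orderOf_dvd hx,
    Nat.odd_iff_exists_dvd_two_pow_sub_one]

end MonoidWithZero

lemma odd_orderOf_iff_pow_eq_one {M : Type*} [Monoid M] {x : M} {e d : ℕ} (hd : Odd d)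
    (hx : x ^ (2 ^ e * d) = 1) : Odd (orderOf x) ↔ x ^ d = 1 := by
  rw [← orderOf_dvd_iff_pow_eq_one]
  refine ⟨fun hodd => ?_, fun hdvd => hd.of_dvd_nat hdvd⟩
  exact (hodd.coprime_two_right.pow_right e).dvd_of_dvd_mul_left (orderOf_dvd_of_pow_eq_one hx)

namespace FiniteField

variable {K : Type*} [Field K] [Fintype K]

lemma exists_isPrimitiveRoot_of_dvd_card_sub_one {d : ℕ} (hd : d ∣ Fintype.card K - 1) :
    ∃ ζ : K, IsPrimitiveRoot ζ d := by
  obtain ⟨g, hg⟩ := IsCyclic.exists_ofOrder_eq_natCard (α := Kˣ)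
  rw [Nat.card_units, Nat.card_eq_fintype_card] at hg
  have hgprim : IsPrimitiveRoot (g : K) (Fintype.card K - 1) :=
    IsPrimitiveRoot.coe_units_iff.mpr (hg ▸ IsPrimitiveRoot.orderOf g)
  obtain ⟨k, hk⟩ := hd
  have hq : 0 < Fintype.card K - 1 := Nat.sub_pos_of_lt Fintype.one_lt_card
  exact ⟨g ^ k, hgprim.pow hq (hk.trans (mul_comm d k))⟩

variable {e d : ℕ}

lemma periodicPts_sq_eq_insert_nthRootsFinset (hd : Odd d)
    (hK : Fintype.card K - 1 = 2 ^ e * d) :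
    periodicPts (fun x : K => x ^ 2) = insert 0 (nthRootsFinset d (1 : K) : Set K) := by
  ext x
  rcases eq_or_ne x 0 with rfl | hx
  · simp only [Set.mem_insert_iff, true_or, iff_true]
    exact ⟨1, one_pos, zero_pow two_ne_zero⟩
  · have hq : x ^ (2 ^ e * d) = 1 := hK ▸ pow_card_sub_one_eq_one x hx
    rw [mem_periodicPts_sq_iff_odd_orderOf hx, odd_orderOf_iff_pow_eq_one hd hq,
      Set.mem_insert_iff, Finset.mem_coe, mem_nthRootsFinset hd.pos, or_iff_right hx]

lemma ncard_periodicPts_sq (hd : Odd d) (hK : Fintype.card K - 1 = 2 ^ e * d) :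
    (periodicPts (fun x : K => x ^ 2)).ncard = 1 + d := by
  obtain ⟨ζ, hζ⟩ :=
    exists_isPrimitiveRoot_of_dvd_card_sub_one (K := K) (hK ▸ dvd_mul_left d _)
  have h0 : (0 : K) ∉ nthRootsFinset d (1 : K) := by
    simp [mem_nthRootsFinset hd.pos, zero_pow hd.pos.ne']
  rw [periodicPts_sq_eq_insert_nthRootsFinset hd hK, Set.ncard_insert_of_notMem h0,
    Set.ncard_coe_finset, hζ.card_nthRootsFinset, add_comm]

end FiniteField

theorem card_periodicPts_sq_general (p : ℕ) [Fact p.Prime]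
    (e d : ℕ) (hd : Odd d) (hpd : p - 1 = 2 ^ e * d) :
    (Function.periodicPts (fun x : ZMod p => x ^ 2)).ncard = 1 + d :=
  FiniteField.ncard_periodicPts_sq hd (by rwa [ZMod.card])

theorem card_periodicPts_sq (p : ℕ) [Fact p.Prime] (hp : p ≠ 2)
    (e d : ℕ) (hd : Odd d) (hpd : p - 1 = 2 ^ e * d) :
    (Function.periodicPts (fun x : ZMod p => x ^ 2)).ncard = 1 + d :=
  card_periodicPts_sq_general p e d hd hpd
end

section
/- Characterization of periodic points of x ↦ x² − 2: let p be an odd prime. An element x ∈ ZMod p is a periodic point of f₋₂(x) = x² − 2 if and only if there exists a nonzero element u of the field GF(p²) (the Galois field with p² elements) whose multiplicative order is odd, such that the image of x under the canonical embedding ZMod p → GF(p²) equals u + u⁻¹. -/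
open Function

lemma iter_key' {K : Type*} [Field K] (n : ℕ) :
    ∀ u : K, u ≠ 0 → (fun y : K => y ^ 2 - 2)^[n] (u + u⁻¹) = u ^ (2 ^ n) + (u ^ (2 ^ n))⁻¹ := by
  induction n with
  | zero => intro u hu; simp
  | succ n ih =>
    intro u hu
    rw [Function.iterate_succ_apply]
    have h1 : (u + u⁻¹) ^ 2 - 2 = u ^ 2 + (u ^ 2)⁻¹ := by
      field_simp
      ring
    show (fun y : K => y ^ 2 - 2)^[n] ((u + u⁻¹) ^ 2 - 2) = _
    rw [h1, ih (u ^ 2) (pow_ne_zero 2 hu), ← pow_mul, pow_succ, mul_comm 2 (2 ^ n)]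

lemma map_iter {R S : Type*} [CommRing R] [CommRing S] (φ : R →+* S) (n : ℕ) (x : R) :
    φ ((fun y : R => y ^ 2 - 2)^[n] x) = (fun y : S => y ^ 2 - 2)^[n] (φ x) := by
  induction n generalizing x with
  | zero => simp
  | succ n ih =>
    rw [Function.iterate_succ_apply, Function.iterate_succ_apply, ih]
    simp [map_ofNat]

lemma exists_sqrt (p : ℕ) [Fact p.Prime] (hp : p ≠ 2) (a : ZMod p) :
    ∃ s : GaloisField p 2, s ^ 2 = algebraMap (ZMod p) (GaloisField p 2) a := by
  haveI : Fintype (GaloisField p 2) := Fintype.ofFinite _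
  by_cases ha : a = 0
  · exact ⟨0, by simp [ha]⟩
  · set b := algebraMap (ZMod p) (GaloisField p 2) a with hb
    have hb0 : b ≠ 0 := by
      intro h
      exact ha ((algebraMap (ZMod p) (GaloisField p 2)).injective
        (by rw [map_zero, ← hb]; exact h))
    have hcard : Fintype.card (GaloisField p 2) = p ^ 2 := by
      rw [← Nat.card_eq_fintype_card]
      exact GaloisField.card p 2 (by norm_num)
    have hchar : ringChar (GaloisField p 2) ≠ 2 := by
      rw [ringChar.eq (GaloisField p 2) p]
      exact hp
    have hodd : Odd p := (Fact.out : p.Prime).odd_of_ne_two hp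
    obtain ⟨k, hk⟩ := hodd
    have hsq : b ^ (Fintype.card (GaloisField p 2) / 2) = 1 := by
      have h1 : b ^ (p - 1) = 1 := by
        rw [hb, ← map_pow, ZMod.pow_card_sub_one_eq_one ha, map_one]
      have harith : Fintype.card (GaloisField p 2) / 2 = (p - 1) * ((p + 1) / 2) := by
        rw [hcard, hk]
        have h4 : (2 * k + 1) ^ 2 = 4 * (k * k) + 4 * k + 1 := by ring
        have h5 : 2 * k + 1 - 1 = 2 * k := by omega
        have h6 : (2 * k + 1 + 1) / 2 = k + 1 := by omega
        have h7 : 2 * k * (k + 1) = 2 * (k * k) + 2 * k := by ring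
        rw [h4, h5, h6, h7]
        omega
      rw [harith, pow_mul, h1, one_pow]
    obtain ⟨r, hr⟩ := (FiniteField.isSquare_iff hchar hb0).mpr hsq
    exact ⟨r, by rw [hr]; ring⟩

theorem periodicPt_sq_sub_two_iff (p : ℕ) [Fact p.Prime] (hp : p ≠ 2) (x : ZMod p) :
    x ∈ Function.periodicPts (fun y : ZMod p => y ^ 2 - 2) ↔
      ∃ u : GaloisField p 2, u ≠ 0 ∧ Odd (orderOf u) ∧
        algebraMap (ZMod p) (GaloisField p 2) x = u + u⁻¹ := by
  have hinj := (algebraMap (ZMod p) (GaloisField p 2)).injective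
  set φ := algebraMap (ZMod p) (GaloisField p 2) with hφ
  set X := φ x with hX
  have h2 : (2 : GaloisField p 2) ≠ 0 := by
    intro h
    have h2z : (2 : ZMod p) ≠ 0 := by
      intro hz
      have hdv : (p : ℕ) ∣ 2 := (ZMod.natCast_eq_zero_iff 2 p).mp (by push_cast; exact hz)
      exact hp ((Nat.prime_dvd_prime_iff_eq (Fact.out : p.Prime) Nat.prime_two).mp hdv)
    exact h2z (hinj (by rw [map_ofNat, map_zero]; exact h))
  constructor
  · intro hx
    obtain ⟨n, hn, hfix⟩ := Function.mem_periodicPts.mp hx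
    obtain ⟨s, hs⟩ := exists_sqrt p hp (x ^ 2 - 4)
    have hs' : s ^ 2 = X ^ 2 - 4 := by
      rw [hs, map_sub, map_pow, ← hX, map_ofNat]
    set u : GaloisField p 2 := (X + s) / 2 with hu
    have hX2 : 2 * u = X + s := by
      rw [hu, mul_comm, div_mul_cancel₀ _ h2]
    have hu2 : u ^ 2 - X * u + 1 = 0 := by
      have h40 : (4 : GaloisField p 2) ≠ 0 := by
        have h44 : (4 : GaloisField p 2) = 2 * 2 := by norm_num
        rw [h44]; exact mul_ne_zero h2 h2
      have h4 : (4 : GaloisField p 2) * (u ^ 2 - X * u + 1) = 0 := by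
        linear_combination (2 * u - X + s) * hX2 + hs'
      rcases mul_eq_zero.mp h4 with h | h
      · exact absurd h h40
      · exact h
    have hu0 : u ≠ 0 := by
      intro h
      rw [h] at hu2
      simp at hu2
    have hinv : u⁻¹ = X - u := inv_eq_of_mul_eq_one_right (by linear_combination -hu2)
    have hXu : X = u + u⁻¹ := by rw [hinv]; ring
    have hfixX : (fun y : GaloisField p 2 => y ^ 2 - 2)^[n] X = X := by
      rw [hX, ← map_iter φ n x, hfix]
    rw [hXu, iter_key' n u hu0] at hfixX
    set a := u ^ (2 ^ n) with ha
    have ha0 : a ≠ 0 := pow_ne_zero _ hu0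
    have hcases : a = u ∨ a * u = 1 := by
      have hA : a * a⁻¹ = 1 := mul_inv_cancel₀ ha0
      have hU : u * u⁻¹ = 1 := mul_inv_cancel₀ hu0
      have hkey : (a - u) * (a * u - 1) = 0 := by
        linear_combination a * u * hfixX - u * hA + a * hU
      rcases mul_eq_zero.mp hkey with h | h
      · exact Or.inl (sub_eq_zero.mp h)
      · exact Or.inr (sub_eq_zero.mp h)
    have hdvd : orderOf u ∣ 2 ^ n - 1 ∨ orderOf u ∣ 2 ^ n + 1 := by
      rcases hcases with h | h
      · left
        apply orderOf_dvd_of_pow_eq_one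
        have hmul : u ^ (2 ^ n - 1) * u = u := by
          rw [← pow_succ, Nat.sub_add_cancel (Nat.one_le_pow _ _ (by norm_num)), ← ha, h]
        have := mul_right_cancel₀ hu0 (hmul.trans (one_mul u).symm)
        exact this
      · right
        apply orderOf_dvd_of_pow_eq_one
        rw [pow_succ, ← ha, h]
    have h2d : 2 ∣ 2 ^ n := dvd_pow_self 2 hn.ne'
    have h1le : 1 ≤ 2 ^ n := Nat.one_le_pow _ _ (by norm_num)
    have hodds : Odd (2 ^ n - 1) ∧ Odd (2 ^ n + 1) := by
      obtain ⟨c, hc⟩ := h2d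
      constructor <;> (rw [Nat.odd_iff]; omega)
    have hodd_of : ∀ m : ℕ, Odd m → orderOf u ∣ m → Odd (orderOf u) := by
      intro m hm hdm
      rcases Nat.even_or_odd (orderOf u) with he | ho
      · exact absurd (he.two_dvd.trans hdm) (by rw [Nat.odd_iff] at hm; omega)
      · exact ho
    have hoddord : Odd (orderOf u) := by
      rcases hdvd with h | h
      · exact hodd_of _ hodds.1 h
      · exact hodd_of _ hodds.2 h
    exact ⟨u, hu0, hoddord, hXu⟩
  · rintro ⟨u, hu0, hodd, hXu⟩
    have hd0 : orderOf u ≠ 0 := by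
      intro h
      rw [h] at hodd
      simp [Nat.odd_iff] at hodd
    have hcop : Nat.Coprime 2 (orderOf u) := Nat.coprime_two_left.mpr hodd
    set n := (orderOf u).totient with hn
    have hnpos : 0 < n := Nat.totient_pos.mpr (Nat.pos_of_ne_zero hd0)
    have hmod : 2 ^ n ≡ 1 [MOD orderOf u] := Nat.ModEq.pow_totient hcop
    have h1le : 1 ≤ 2 ^ n := Nat.one_le_pow _ _ (by norm_num)
    have hdvd : orderOf u ∣ 2 ^ n - 1 := (Nat.modEq_iff_dvd' h1le).mp hmod.symm
    have hpow1 : u ^ (2 ^ n - 1) = 1 := orderOf_dvd_iff_pow_eq_one.mp hdvd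
    have hpow : u ^ (2 ^ n) = u := by
      conv_lhs => rw [← Nat.sub_add_cancel h1le]
      rw [pow_succ, hpow1, one_mul]
    refine Function.mem_periodicPts.mpr ⟨n, hnpos, ?_⟩
    have hmain : φ ((fun y : ZMod p => y ^ 2 - 2)^[n] x) = φ x := by
      rw [map_iter φ n x, ← hX, hXu, iter_key' n u hu0, hpow]
    exact hinj hmain
end

section
/- Cycles of length 2 of f_c (Peinado et al., Proposition 4): let p be an odd prime and c ∈ ZMod p. The map f_c(x) = x² + c has a point of exact period 2 in ZMod p (i.e., there exists x with f_c(f_c(x)) = x and f_c(x) ≠ x) if and only if −(4c + 3) is a nonzero square in ZMod p (i.e., there exists y ≠ 0 in ZMod p with y² = −(4c + 3)). -/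
theorem exists_exact_period_two_iff (p : ℕ) [Fact p.Prime] (hp : p ≠ 2) (c : ZMod p) :
    (∃ x : ZMod p, (x ^ 2 + c) ^ 2 + c = x ∧ x ^ 2 + c ≠ x) ↔
      ∃ y : ZMod p, y ≠ 0 ∧ y ^ 2 = -(4 * c + 3) := by
  have hp2 : (2 : ZMod p) ≠ 0 := by
    have h2 : ((2 : ℕ) : ZMod p) ≠ 0 := by
      rw [Ne, ZMod.natCast_eq_zero_iff]
      exact fun h => hp (((Nat.prime_dvd_prime_iff_eq Fact.out Nat.prime_two).mp h))
    simpa using h2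
  constructor
  · rintro ⟨x, h1, h2⟩
    have key : (x ^ 2 - x + c) * (x ^ 2 + x + c + 1) = 0 := by linear_combination h1
    have hne : x ^ 2 - x + c ≠ 0 := fun h => h2 (by linear_combination h)
    have hfac2 : x ^ 2 + x + c + 1 = 0 := by
      rcases mul_eq_zero.mp key with h | h
      · exact absurd h hne
      · exact h
    refine ⟨2 * x + 1, ?_, by linear_combination 4 * hfac2⟩
    intro h
    exact hne (by linear_combination hfac2 - h)
  · rintro ⟨y, hy0, hy2⟩
    have h4 : (4 : ZMod p) ≠ 0 := by
      have : (4 : ZMod p) = 2 * 2 := by norm_num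
      rw [this]
      exact mul_ne_zero hp2 hp2
    set x : ZMod p := (y - 1) / 2 with hxdef
    have h2x : (2 : ZMod p) * x = y - 1 := by
      rw [hxdef]; field_simp
    refine ⟨x, ?_, ?_⟩
    · have h16 : (16 : ZMod p) ≠ 0 := by
        have : (16 : ZMod p) = 4 * 4 := by norm_num
        rw [this]; exact mul_ne_zero h4 h4
      have key : (16 : ZMod p) * (((x ^ 2 + c) ^ 2 + c) - x) = 0 := by
        linear_combination (y ^ 2 - 4 * y + 4 * c + 3) * hy2 +
          (8 * x ^ 3 + 4 * x ^ 2 * y - 4 * x ^ 2 + 2 * x * y ^ 2 - 4 * x * y + 2 * x +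
            16 * c * x + y ^ 3 - 3 * y ^ 2 + 3 * y + 8 * c * y - 9 - 8 * c) * h2x
      have := mul_eq_zero.mp key
      rcases this with h | h
      · exact absurd h h16
      · exact sub_eq_zero.mp h
    · intro h
      apply hy0
      have key : (4 : ZMod p) * y = 0 := by
        linear_combination hy2 + (2 * x + y - 3) * h2x - 4 * h
      rcases mul_eq_zero.mp key with h' | h'
      · exact absurd h' h4
      · exact h'
end
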